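/- arXiv:1707.09000 — 3 statements merged into one kernel-verified Lean document; each statement's English description precedes it below -/
import Mathlib

section
/- Let f : ℝ → ℝ be continuous, bounded and integrable. Then the function g(x) := (K∗f)(x) = ∫_ℝ ½ e^{−|x−y|} f(y) dy is twice continuously differentiable on ℝ and satisfies g(x) − g''(x) = f(x) for every x ∈ ℝ; equivalently, K∗ inverts the Helmholtz operator 1 − ∂ₓ², and ∂ₓ²(K∗f) = K∗f − f. -/
open MeasureTheory Real Set Filter Topology

/-- Convolution with the Green's function `K(x-y) = ½ e^{-|x-y|}` of the
Helmholtz operator `1 - ∂ₓ²`. -/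
noncomputable def Kconv (f : ℝ → ℝ) : ℝ → ℝ :=
  fun x => ∫ y : ℝ, (1 / 2) * Real.exp (-|x - y|) * f y

/-!
Splitting the integral at `y = x` gives
`K∗f(x) = ½ (e^{-x} ∫_{-∞}^x e^y f(y) dy + e^x ∫_x^∞ e^{-y} f(y) dy)`.
Differentiating with the fundamental theorem of calculus, the boundary terms `±½ f(x)` cancel
in the first derivative and add up to `-f(x)` in the second, which is otherwise `K∗f(x)` again.
-/

section

variable {E : Type*} [NormedAddCommGroup E] [NormedSpace ℝ E]

theorem hasDerivAt_integral_Iic [CompleteSpace E] {g : ℝ → E}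
    (hg : ∀ u, IntegrableOn g (Iic u)) (hg_cont : Continuous g) (x : ℝ) :
    HasDerivAt (fun u => ∫ y in Iic u, g y) (g x) x := by
  have h_eq : (fun u => ∫ y in Iic u, g y) =
      fun u => (∫ y in Iic 0, g y) + ∫ y in 0..u, g y := by
    funext u
    rw [← intervalIntegral.integral_Iic_sub_Iic (hg 0) (hg u), add_sub_cancel]
  rw [h_eq]
  exact (intervalIntegral.integral_hasDerivAt_right (hg_cont.intervalIntegrable 0 x)
    hg_cont.stronglyMeasurable.stronglyMeasurableAtFilter hg_cont.continuousAt).const_add _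

theorem hasDerivAt_integral_Ioi [CompleteSpace E] {g : ℝ → E}
    (hg : ∀ u, IntegrableOn g (Ioi u)) (hg_cont : Continuous g) (x : ℝ) :
    HasDerivAt (fun u => ∫ y in Ioi u, g y) (-g x) x := by
  have h_eq : (fun u => ∫ y in Ioi u, g y) =
      fun u => (∫ y in Ioi 0, g y) - ∫ y in 0..u, g y := by
    funext u
    rw [← intervalIntegral.integral_Ioi_sub_Ioi' (hg 0) (hg u), sub_sub_cancel]
  rw [h_eq]
  exact (intervalIntegral.integral_hasDerivAt_right (hg_cont.intervalIntegrable 0 x)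
    hg_cont.stronglyMeasurable.stronglyMeasurableAtFilter hg_cont.continuousAt).const_sub _

theorem contDiff_two_of_hasDerivAt {g g' g'' : ℝ → E} (hg : ∀ x, HasDerivAt g (g' x) x)
    (hg' : ∀ x, HasDerivAt g' (g'' x) x) (hg'' : Continuous g'') : ContDiff ℝ 2 g := by
  have h_deriv : deriv g = g' := funext fun x => (hg x).deriv
  have h_deriv' : deriv g' = g'' := funext fun x => (hg' x).deriv
  rw [show (2 : WithTop ℕ∞) = 1 + 1 from rfl, contDiff_succ_iff_deriv, h_deriv,
    contDiff_one_iff_deriv, h_deriv']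
  exact ⟨fun x => (hg x).differentiableAt, by simp, fun x => (hg' x).differentiableAt, hg''⟩

end

namespace Kconv

noncomputable def lowerIntegral (f : ℝ → ℝ) (x : ℝ) : ℝ := ∫ y in Iic x, exp y * f y

noncomputable def upperIntegral (f : ℝ → ℝ) (x : ℝ) : ℝ := ∫ y in Ioi x, exp (-y) * f y

noncomputable def derivative (f : ℝ → ℝ) (x : ℝ) : ℝ :=
  (exp x * upperIntegral f x - exp (-x) * lowerIntegral f x) / 2

variable {f : ℝ → ℝ}

theorem integrableOn_exp_mul_Iic (hf : Integrable f) (x : ℝ) :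
    IntegrableOn (fun y => exp y * f y) (Iic x) := by
  refine hf.integrableOn.bdd_mul (c := exp x) continuous_exp.aestronglyMeasurable ?_
  filter_upwards [ae_restrict_mem measurableSet_Iic] with y hy
  rw [norm_of_nonneg (exp_pos y).le]
  exact exp_le_exp.mpr hy

theorem integrableOn_exp_neg_mul_Ioi (hf : Integrable f) (x : ℝ) :
    IntegrableOn (fun y => exp (-y) * f y) (Ioi x) := by
  refine hf.integrableOn.bdd_mul (c := exp (-x))
    (continuous_exp.comp continuous_neg).aestronglyMeasurable ?_
  filter_upwards [ae_restrict_mem measurableSet_Ioi] with y hy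
  rw [norm_of_nonneg (exp_pos _).le]
  exact exp_le_exp.mpr (neg_le_neg hy.le)

theorem integrable_kernel_mul (hf : Integrable f) (x : ℝ) :
    Integrable fun y => (1 / 2) * exp (-|x - y|) * f y := by
  refine hf.bdd_mul (c := 1 / 2) (by fun_prop) (ae_of_all _ fun y => ?_)
  rw [norm_of_nonneg (by positivity)]
  have : exp (-|x - y|) ≤ 1 := exp_le_one_iff.mpr (neg_nonpos.mpr (abs_nonneg _))
  linarith

theorem eq_lowerIntegral_add_upperIntegral (hf : Integrable f) (x : ℝ) :
    Kconv f x = (exp (-x) * lowerIntegral f x + exp x * upperIntegral f x) / 2 := by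
  rw [Kconv, ← intervalIntegral.integral_Iic_add_Ioi (integrable_kernel_mul hf x).integrableOn
    (integrable_kernel_mul hf x).integrableOn, lowerIntegral, upperIntegral,
    ← integral_const_mul, ← integral_const_mul, add_div, ← integral_div, ← integral_div]
  congr 1
  · refine setIntegral_congr_fun measurableSet_Iic fun y hy => ?_
    rw [abs_of_nonneg (sub_nonneg.mpr hy), neg_sub, sub_eq_add_neg, exp_add]
    ring
  · refine setIntegral_congr_fun measurableSet_Ioi fun y hy => ?_
    rw [abs_of_neg (sub_neg.mpr hy), neg_neg, sub_eq_add_neg, exp_add]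
    ring

theorem hasDerivAt_lowerIntegral (hf_cont : Continuous f) (hf : Integrable f) (x : ℝ) :
    HasDerivAt (lowerIntegral f) (exp x * f x) x :=
  hasDerivAt_integral_Iic (integrableOn_exp_mul_Iic hf) (by fun_prop) x

theorem hasDerivAt_upperIntegral (hf_cont : Continuous f) (hf : Integrable f) (x : ℝ) :
    HasDerivAt (upperIntegral f) (-(exp (-x) * f x)) x :=
  hasDerivAt_integral_Ioi (integrableOn_exp_neg_mul_Ioi hf) (by fun_prop) x

theorem hasDerivAt (hf_cont : Continuous f) (hf : Integrable f) (x : ℝ) :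
    HasDerivAt (Kconv f) (derivative f x) x := by
  rw [funext (eq_lowerIntegral_add_upperIntegral hf)]
  refine ((((hasDerivAt_neg x).exp.mul (hasDerivAt_lowerIntegral hf_cont hf x)).add
    ((hasDerivAt_exp x).mul (hasDerivAt_upperIntegral hf_cont hf x))).div_const 2
    ).congr_deriv ?_
  rw [derivative, exp_neg]
  field_simp
  ring

theorem hasDerivAt_derivative (hf_cont : Continuous f) (hf : Integrable f) (x : ℝ) :
    HasDerivAt (derivative f) (Kconv f x - f x) x := by
  refine ((((hasDerivAt_exp x).mul (hasDerivAt_upperIntegral hf_cont hf x)).sub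
    ((hasDerivAt_neg x).exp.mul (hasDerivAt_lowerIntegral hf_cont hf x))).div_const 2
    ).congr_deriv ?_
  rw [eq_lowerIntegral_add_upperIntegral hf, exp_neg]
  field_simp
  ring

end Kconv

theorem helmholtz_green_inverse_general (f : ℝ → ℝ)
    (hf_cont : Continuous f)
    (hf_int : Integrable f) :
    ContDiff ℝ 2 (Kconv f) ∧
      ∀ x : ℝ, Kconv f x - deriv (deriv (Kconv f)) x = f x := by
  have h_deriv := Kconv.hasDerivAt hf_cont hf_int
  have h_deriv2 := Kconv.hasDerivAt_derivative hf_cont hf_int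
  have h_cont : Continuous (Kconv f) := continuous_iff_continuousAt.mpr fun x =>
    (h_deriv x).continuousAt
  refine ⟨contDiff_two_of_hasDerivAt h_deriv h_deriv2 (h_cont.sub hf_cont), fun x => ?_⟩
  rw [funext fun x => (h_deriv x).deriv, (h_deriv2 x).deriv, sub_sub_cancel]

/-- If `f` is continuous, bounded and integrable, then `g := K∗f` is twice
continuously differentiable and satisfies `g - g'' = f`, i.e. `K∗` inverts the
Helmholtz operator `1 - ∂ₓ²` and `∂ₓ²(K∗f) = K∗f - f`. -/
theorem helmholtz_green_inverse (f : ℝ → ℝ)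
    (hf_cont : Continuous f)
    (hf_bdd : ∃ C, ∀ x, |f x| ≤ C)
    (hf_int : Integrable f) :
    ContDiff ℝ 2 (Kconv f) ∧
      ∀ x : ℝ, Kconv f x - deriv (deriv (Kconv f)) x = f x :=
  helmholtz_green_inverse_general f hf_cont hf_int
end

section
/- Let c ∈ ℝ and define the single peakon u(x,t) := c e^{−|x − c t|}. Then for every t ∈ ℝ and every x ≠ c t, u is differentiable in x and t at (x,t) and satisfies the advective form of the Camassa–Holm equation u_t(x,t) + u(x,t) u_x(x,t) = −∂ₓ(K∗(u(·,t)² + ½ u_x(·,t)²))(x), where u_x(·,t) denotes the (almost-everywhere defined) spatial derivative y ↦ −c·sgn(y − c t) e^{−|y − c t|}. -/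
/-!
Away from the peak `a = ct` the peakon is a sum of exponentials, so `u_t` and `u_x` are explicit.
The nonlocal term is computed in closed form: since `sgn² = 1` almost everywhere,
`u² + ½ u_x² = (3/2) c² e^{-2|y - a|}` a.e., and splitting the convolution integral at `a`
and `x` gives `K∗(u² + ½ u_x²) = c² (E - E²/2)` with `E = e^{-|x - a|}`.
Both sides of the equation then equal `c² sgn(x - a) (E - E²)`.
-/

open MeasureTheory Real Set Filter Topology

lemma Real.sign_sq_of_ne_zero {r : ℝ} (hr : r ≠ 0) : Real.sign r ^ 2 = 1 := by
  rcases Real.sign_apply_eq_of_ne_zero r hr with h | h <;> simp [h]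

lemma hasDerivAt_abs_real_sign {x : ℝ} (hx : x ≠ 0) : HasDerivAt (|·|) (Real.sign x) x := by
  rcases hx.lt_or_gt with h | h
  · simpa [Real.sign_of_neg h] using hasDerivAt_abs_neg h
  · simpa [Real.sign_of_pos h] using hasDerivAt_abs_pos h

lemma hasDerivAt_exp_neg_abs {f : ℝ → ℝ} {f' x : ℝ} (hf : HasDerivAt f f' x)
    (hx : f x ≠ 0) :
    HasDerivAt (fun y => exp (-|f y|)) (exp (-|f x|) * -(Real.sign (f x) * f')) x :=
  ((hasDerivAt_abs_real_sign hx).comp x hf).neg.exp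

lemma integral_exp_neg_abs_sub_add_two_abs_of_nonneg {s : ℝ} (hs : 0 ≤ s) :
    ∫ y, exp (-(|s - y| + 2 * |y|)) = 4 / 3 * exp (-s) - 2 / 3 * exp (-(2 * s)) := by
  set g := fun y : ℝ => exp (-(|s - y| + 2 * |y|))
  have eq_Iic : EqOn g (fun y => exp (-s) * exp (3 * y)) (Iic 0) := fun y (hy : y ≤ 0) => by
    simp only [g, abs_of_nonpos hy, abs_of_nonneg (by linarith : 0 ≤ s - y), ← exp_add]
    ring_nf
  have eq_Ioc : EqOn g (fun y => exp (-s - y)) (Ioc 0 s) := fun y hy => by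
    simp only [g, abs_of_pos hy.1, abs_of_nonneg (by linarith [hy.2] : 0 ≤ s - y)]
    ring_nf
  have eq_Ioi : EqOn g (fun y => exp s * exp (-3 * y)) (Ioi s) := fun y (hy : s < y) => by
    simp only [g, abs_of_pos (by linarith : 0 < y), abs_of_neg (by linarith : s - y < 0),
      ← exp_add]
    ring_nf
  have int_Iic : IntegrableOn g (Iic 0) :=
    IntegrableOn.congr_fun ((integrableOn_exp_mul_Iic (by norm_num) 0).const_mul _) eq_Iic.symm
      measurableSet_Iic
  have int_Ioc : IntegrableOn g (Ioc 0 s) := (by fun_prop : Continuous g).integrableOn_Ioc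
  have int_Ioi : IntegrableOn g (Ioi s) :=
    IntegrableOn.congr_fun ((integrableOn_exp_mul_Ioi (by norm_num) s).const_mul _) eq_Ioi.symm
      measurableSet_Ioi
  have int_Ioi_zero : IntegrableOn g (Ioi 0) := Ioc_union_Ioi_eq_Ioi hs ▸ int_Ioc.union int_Ioi
  have value_Iic : ∫ y in Iic 0, g y = exp (-s) / 3 := by
    rw [setIntegral_congr_fun measurableSet_Iic eq_Iic, integral_const_mul,
      integral_exp_mul_Iic (by norm_num)]
    simp [div_eq_mul_inv]
  have value_Ioc : ∫ y in Ioc 0 s, g y = exp (-s) - exp (-(2 * s)) := by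
    rw [setIntegral_congr_fun measurableSet_Ioc eq_Ioc, ← intervalIntegral.integral_of_le hs,
      intervalIntegral.integral_comp_sub_left exp (-s), integral_exp]
    ring_nf
  have value_Ioi : ∫ y in Ioi s, g y = exp (-(2 * s)) / 3 := by
    rw [setIntegral_congr_fun measurableSet_Ioi eq_Ioi, integral_const_mul,
      integral_exp_mul_Ioi (by norm_num), show -(2 * s) = s + -3 * s by ring, exp_add]
    ring
  rw [← intervalIntegral.integral_Iic_add_Ioi int_Iic int_Ioi_zero,
    ← Ioc_union_Ioi_eq_Ioi hs, setIntegral_union (Ioc_disjoint_Ioi le_rfl) measurableSet_Ioi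
      int_Ioc int_Ioi, value_Iic, value_Ioc, value_Ioi]
  ring

lemma integral_exp_neg_abs_sub_add_two_abs (s : ℝ) :
    ∫ y, exp (-(|s - y| + 2 * |y|)) = 4 / 3 * exp (-|s|) - 2 / 3 * exp (-(2 * |s|)) := by
  rcases le_or_gt 0 s with hs | hs
  · rw [abs_of_nonneg hs, integral_exp_neg_abs_sub_add_two_abs_of_nonneg hs]
  · rw [abs_of_neg hs, ← integral_exp_neg_abs_sub_add_two_abs_of_nonneg (neg_nonneg.2 hs.le),
      ← integral_neg_eq_self]
    congr 1 with y
    rw [abs_neg, show s - -y = -(-s - y) by ring, abs_neg]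

lemma Kconv_peakon (c a : ℝ) :
    Kconv (fun y => (c * exp (-|y - a|)) ^ 2
        + 1 / 2 * (-c * Real.sign (y - a) * exp (-|y - a|)) ^ 2)
      = fun x => c ^ 2 * (exp (-|x - a|) - exp (-|x - a|) ^ 2 / 2) := by
  funext x
  have ae_eq : (fun y => 1 / 2 * exp (-|x - y|) * ((c * exp (-|y - a|)) ^ 2
        + 1 / 2 * (-c * Real.sign (y - a) * exp (-|y - a|)) ^ 2))
      =ᵐ[volume] fun y => 3 / 4 * c ^ 2 * exp (-(|x - a - (y - a)| + 2 * |y - a|)) := by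
    filter_upwards [compl_mem_ae_iff.mpr (volume_singleton (a := a))] with y (hy : y ≠ a)
    simp only [mul_pow, Real.sign_sq_of_ne_zero (sub_ne_zero.2 hy), sub_sub_sub_cancel_right,
      neg_add, exp_add, two_mul]
    ring
  rw [Kconv, integral_congr_ae ae_eq, integral_const_mul,
    integral_sub_right_eq_self (fun y => exp (-(|x - a - y| + 2 * |y|))),
    integral_exp_neg_abs_sub_add_two_abs, two_mul, neg_add, exp_add]
  ring

/-- The single peakon `u(x,t) = c e^{-|x - ct|}` satisfies the advective form of
the Camassa–Holm equation `u_t + u u_x = -∂ₓ(K∗(u² + ½ u_x²))` away from the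
peak, where the (a.e. defined) spatial derivative is
`u_x(y,t) = -c sgn(y - ct) e^{-|y - ct|}`. -/
theorem peakon_solves_camassaHolm (c : ℝ) :
    let u : ℝ → ℝ → ℝ := fun x t => c * Real.exp (-|x - c * t|)
    let ux : ℝ → ℝ → ℝ := fun y t => -c * Real.sign (y - c * t) * Real.exp (-|y - c * t|)
    ∀ t x : ℝ, x ≠ c * t →
      DifferentiableAt ℝ (fun x' => u x' t) x ∧
      DifferentiableAt ℝ (fun t' => u x t') t ∧
      deriv (fun t' => u x t') t + u x t * ux x t
        = - deriv (Kconv (fun y => (u y t) ^ 2 + (1 / 2) * (ux y t) ^ 2)) x := by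
  intro u ux t x hx
  simp only [u, ux]
  have hxa : x - c * t ≠ 0 := sub_ne_zero.2 hx
  have dx := hasDerivAt_exp_neg_abs ((hasDerivAt_id' x).sub_const (c * t)) hxa
  have dt := hasDerivAt_exp_neg_abs (((hasDerivAt_id' t).const_mul c).const_sub x) hxa
  refine ⟨(dx.const_mul c).differentiableAt, (dt.const_mul c).differentiableAt, ?_⟩
  have dK : HasDerivAt (fun y => c ^ 2 * (exp (-|y - c * t|) - exp (-|y - c * t|) ^ 2 / 2)) _ x :=
    (dx.sub ((dx.pow 2).div_const 2)).const_mul _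
  rw [(dt.const_mul c).deriv, Kconv_peakon c (c * t), dK.deriv]
  ring
end

section
/- Let M ≥ 1, T > 0, and let q_a, p_a : [0,T) → ℝ (a = 1,…,M) be C¹ functions such that the positions q_a(t) are pairwise distinct for every t, and such that they satisfy the canonical peakon Hamiltonian equations q̇_a(t) = ½ Σ_{b=1}^{M} p_b(t) e^{−|q_a(t) − q_b(t)|} and ṗ_a(t) = ½ p_a(t) Σ_{b=1}^{M} p_b(t) sgn(q_a(t) − q_b(t)) e^{−|q_a(t) − q_b(t)|} (with the convention sgn(0) = 0). Then the peakon wave train u(x,t) := ½ Σ_{a=1}^{M} p_a(t) e^{−|x − q_a(t)|} satisfies the advective form of the Camassa–Holm equation u_t + u u_x = −∂ₓ(K∗(u² + ½ u_x²)) at every (x,t) with x ∉ {q_1(t),…,q_M(t)}, where u_x(·,t) denotes the almost-everywhere defined spatial derivative. -/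
open MeasureTheory Real Set Filter Topology

/-!
Fix `t` and write `u`, `uₓ` for the profile and its a.e. derivative. Off the peaks `u'' = u`,
so for `η = ±1` the function `e^{ηy} (u uₓ - η/2 uₓ²)` is a primitive of `e^{ηy} (u² + ½ uₓ²)`
between consecutive peaks. Correcting it by the jumps it makes at the peaks gives a primitive
`Φ_η` that is continuous on all of `ℝ` and vanishes at the end where `e^{ηy}` decays, so
`K∗(u² + ½ uₓ²) = ½ e^{-x} Φ₁ - ½ eˣ Φ₋₁`. Differentiating this at a non-peak `x` gives
`-u uₓ + ½ Σ_a p_a (uₓ(q_a) - sgn(x - q_a) u(q_a)) e^{-|x - q_a|}`, while the Hamiltonian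
equations read `q̇_a = u(q_a)`, `ṗ_a = -p_a uₓ(q_a)` (with `sgn 0 = 0`), which turns `u_t` into
exactly the sum.
-/

lemma Real.abs_sign_le_one (z : ℝ) : |Real.sign z| ≤ 1 := by
  rcases Real.sign_apply_eq z with h | h | h <;> simp [h]

lemma Real.sign_sq_of_ne_zero_s7 {z : ℝ} (hz : z ≠ 0) : Real.sign z ^ 2 = 1 := by
  rcases Real.sign_apply_eq_of_ne_zero z hz with h | h <;> simp [h]

lemma Real.sign_mul_self (z : ℝ) : Real.sign z * z = |z| := by
  rcases lt_trichotomy z 0 with h | rfl | h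
  · simp [Real.sign_of_neg h, abs_of_neg h]
  · simp
  · simp [Real.sign_of_pos h, abs_of_pos h]

@[fun_prop]
lemma Real.measurable_sign : Measurable Real.sign :=
  Measurable.ite measurableSet_Iio measurable_const
    (Measurable.ite measurableSet_Ioi measurable_const measurable_const)

section HalfLine

variable {E : Type*} [NormedAddCommGroup E] [NormedSpace ℝ E] [CompleteSpace E]

theorem integral_Iic_eq_of_hasDerivAt_off_countable {F g : ℝ → E} {s : Set ℝ} {x : ℝ}
    (hs : s.Countable) (hF : Continuous F) (hd : ∀ y ∉ s, HasDerivAt F (g y) y)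
    (hg : IntegrableOn g (Iic x)) (hbot : Tendsto F atBot (𝓝 0)) :
    ∫ y in Iic x, g y = F x := by
  have hlim := intervalIntegral_tendsto_integral_Iic x hg tendsto_id
  have hftc : ∀ᶠ a in atBot, ∫ y in a..x, g y = F x - F a := by
    filter_upwards [eventually_le_atBot x] with a ha
    refine integral_eq_of_hasDerivAt_off_countable_of_le F g ha hs hF.continuousOn
      (fun y hy => hd y hy.2) ?_
    exact (intervalIntegrable_iff_integrableOn_Icc_of_le ha).2 (hg.mono_set Icc_subset_Iic_self)
  exact tendsto_nhds_unique (hlim.congr' hftc) (by simpa using tendsto_const_nhds.sub hbot)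

theorem integral_Ioi_eq_of_hasDerivAt_off_countable {F g : ℝ → E} {s : Set ℝ} {x : ℝ}
    (hs : s.Countable) (hF : Continuous F) (hd : ∀ y ∉ s, HasDerivAt F (g y) y)
    (hg : IntegrableOn g (Ioi x)) (htop : Tendsto F atTop (𝓝 0)) :
    ∫ y in Ioi x, g y = -F x := by
  have hlim := intervalIntegral_tendsto_integral_Ioi x hg tendsto_id
  have hftc : ∀ᶠ b in atTop, ∫ y in x..b, g y = F b - F x := by
    filter_upwards [eventually_ge_atTop x] with b hb
    refine integral_eq_of_hasDerivAt_off_countable_of_le F g hb hs hF.continuousOn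
      (fun y hy => hd y hy.2) ?_
    exact (intervalIntegrable_iff_integrableOn_Ioc_of_le hb).2 (hg.mono_set Ioc_subset_Ioi_self)
  exact tendsto_nhds_unique (hlim.congr' hftc) (by simpa using htop.sub_const (F x))

end HalfLine

theorem Kconv_eq_integral_Iic_add_integral_Ioi {f : ℝ → ℝ} {x : ℝ}
    (hIic : IntegrableOn (fun y => exp y * f y) (Iic x))
    (hIoi : IntegrableOn (fun y => exp (-y) * f y) (Ioi x)) :
    Kconv f x = exp (-x) / 2 * (∫ y in Iic x, exp y * f y)
      + exp x / 2 * ∫ y in Ioi x, exp (-y) * f y := by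
  have hleft : EqOn (fun y => (1 / 2) * exp (-|x - y|) * f y)
      (fun y => exp (-x) / 2 * (exp y * f y)) (Iic x) := by
    intro y (hy : y ≤ x)
    simp only [abs_of_nonneg (sub_nonneg.2 hy), neg_sub, sub_eq_add_neg y x, exp_add]
    ring
  have hright : EqOn (fun y => (1 / 2) * exp (-|x - y|) * f y)
      (fun y => exp x / 2 * (exp (-y) * f y)) (Ioi x) := by
    intro y (hy : x < y)
    show 1 / 2 * exp (-|x - y|) * f y = _
    rw [abs_of_neg (sub_neg.2 hy), neg_neg, sub_eq_add_neg, exp_add]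
    ring
  rw [Kconv, ← intervalIntegral.integral_Iic_add_Ioi
      (IntegrableOn.congr_fun (hIic.const_mul _) hleft.symm measurableSet_Iic)
      (IntegrableOn.congr_fun (hIoi.const_mul _) hright.symm measurableSet_Ioi),
    setIntegral_congr_fun measurableSet_Iic hleft, setIntegral_congr_fun measurableSet_Ioi hright,
    integral_const_mul, integral_const_mul]

theorem integrableOn_Iic_exp_mul {f : ℝ → ℝ} {C : ℝ} (hf : AEStronglyMeasurable f)
    (hC : ∀ y, |f y| ≤ C) (x : ℝ) : IntegrableOn (fun y => exp y * f y) (Iic x) :=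
  (integrableOn_exp_Iic x).mul_bdd hf.restrict (ae_of_all _ hC)

theorem integrableOn_Ioi_exp_neg_mul {f : ℝ → ℝ} {C : ℝ} (hf : AEStronglyMeasurable f)
    (hC : ∀ y, |f y| ≤ C) (x : ℝ) : IntegrableOn (fun y => exp (-y) * f y) (Ioi x) :=
  (integrableOn_exp_neg_Ioi x).mul_bdd hf.restrict (ae_of_all _ hC)

theorem HasDerivAt.exp_neg_abs_const_sub {g : ℝ → ℝ} {g' x t : ℝ} (hg : HasDerivAt g g' t)
    (hx : x ≠ g t) :
    HasDerivAt (fun s => Real.exp (-|x - g s|))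
      (Real.sign (x - g t) * g' * Real.exp (-|x - g t|)) t := by
  refine (((hasDerivAt_abs (sub_ne_zero.2 hx)).comp t (hg.const_sub x)).neg.exp).congr_deriv ?_
  rcases (sub_ne_zero.2 hx).lt_or_gt with h | h
  · simp [h, Real.sign_of_neg h, mul_comm]
  · simp [h, Real.sign_of_pos h, mul_comm]

namespace Peakon

variable {M : ℕ} (q p : Fin M → ℝ)

noncomputable def u (y : ℝ) : ℝ := (1 / 2) * ∑ a, p a * exp (-|y - q a|)

noncomputable def ux (y : ℝ) : ℝ :=
  -(1 / 2) * ∑ a, p a * Real.sign (y - q a) * exp (-|y - q a|)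

noncomputable def source (y : ℝ) : ℝ := u q p y ^ 2 + (1 / 2) * ux q p y ^ 2

lemma abs_mul_exp_neg_abs_le {c : ℝ} (hc : |c| ≤ 1) (a : Fin M) (y : ℝ) :
    |p a * c * exp (-|y - q a|)| ≤ |p a| := by
  rw [abs_mul, abs_mul, abs_exp]
  have hexp : exp (-|y - q a|) ≤ 1 := exp_le_one_iff.2 (neg_nonpos.2 (abs_nonneg _))
  calc |p a| * |c| * exp (-|y - q a|) ≤ |p a| * 1 * 1 := by gcongr
    _ = |p a| := by ring

lemma abs_half_mul_sum_le {g : Fin M → ℝ} (hg : ∀ a, |g a| ≤ |p a|) {c : ℝ}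
    (hc : |c| = 1 / 2) :
    |c * ∑ a, g a| ≤ ∑ a, |p a| := by
  rw [abs_mul, hc]
  have := (Finset.abs_sum_le_sum_abs g Finset.univ).trans (Finset.sum_le_sum fun a _ => hg a)
  linarith [Finset.sum_nonneg fun a (_ : a ∈ Finset.univ) => abs_nonneg (p a)]

lemma abs_u_le (y : ℝ) : |u q p y| ≤ ∑ a, |p a| :=
  abs_half_mul_sum_le p (fun a => by simpa using abs_mul_exp_neg_abs_le q p (c := 1) (by simp) a y)
    (by norm_num)

lemma abs_ux_le (y : ℝ) : |ux q p y| ≤ ∑ a, |p a| :=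
  abs_half_mul_sum_le p (fun a => abs_mul_exp_neg_abs_le q p (Real.abs_sign_le_one _) a y)
    (by norm_num)

lemma measurable_source : Measurable (source q p) := by
  unfold source u ux
  fun_prop

lemma abs_source_le (y : ℝ) : |source q p y| ≤ 3 / 2 * (∑ a, |p a|) ^ 2 := by
  have hu := sq_le_sq' (abs_le.1 (abs_u_le q p y)).1 (abs_le.1 (abs_u_le q p y)).2
  have hx := sq_le_sq' (abs_le.1 (abs_ux_le q p y)).1 (abs_le.1 (abs_ux_le q p y)).2
  rw [abs_of_nonneg (by unfold source; positivity)]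
  unfold source
  linarith

noncomputable def uFrozen (ε : Fin M → ℝ) (y : ℝ) : ℝ :=
  (1 / 2) * ∑ a, p a * exp (-(ε a * (y - q a)))

noncomputable def uxFrozen (ε : Fin M → ℝ) (y : ℝ) : ℝ :=
  -(1 / 2) * ∑ a, p a * ε a * exp (-(ε a * (y - q a)))

lemma hasDerivAt_exp_neg_mul_sub (c b y : ℝ) :
    HasDerivAt (fun y => exp (-(c * (y - b)))) (-c * exp (-(c * (y - b)))) y := by
  simpa [mul_comm] using ((((hasDerivAt_id y).sub_const b).const_mul c).neg).exp

lemma hasDerivAt_uFrozen (ε : Fin M → ℝ) (y : ℝ) :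
    HasDerivAt (uFrozen q p ε) (uxFrozen q p ε y) y := by
  have h := (HasDerivAt.fun_sum (u := Finset.univ) fun a _ =>
    (hasDerivAt_exp_neg_mul_sub (ε a) (q a) y).const_mul (p a)).const_mul (1 / 2 : ℝ)
  refine h.congr_deriv ?_
  simp only [uxFrozen, Finset.mul_sum]
  exact Finset.sum_congr rfl fun a _ => by ring

lemma hasDerivAt_uxFrozen {ε : Fin M → ℝ} (hε : ∀ a, ε a ^ 2 = 1) (y : ℝ) :
    HasDerivAt (uxFrozen q p ε) (uFrozen q p ε y) y := by
  have h := (HasDerivAt.fun_sum (u := Finset.univ) fun a _ =>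
    (hasDerivAt_exp_neg_mul_sub (ε a) (q a) y).const_mul (p a * ε a)).const_mul (-(1 / 2) : ℝ)
  refine h.congr_deriv ?_
  simp only [uFrozen, Finset.mul_sum]
  exact Finset.sum_congr rfl fun a _ => by
    linear_combination (1 / 2 * p a * exp (-(ε a * (y - q a)))) * hε a

-- The jump of `exp (η * y) * (u * ux - η / 2 * ux ^ 2)` across the peak `q a`; here
-- `ux q p (q a)` is the mean of the one-sided slopes there.
noncomputable def jump (η : ℝ) (a : Fin M) : ℝ :=
  -(p a * exp (η * q a) * (u q p (q a) - η * ux q p (q a)))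

-- The `p a ^ 2` term only matters at a peak, where `Real.sign 0 = 0`: it makes the value there
-- agree with both one-sided limits (`SignsAgreeAt.primitive_eq`).
noncomputable def primitive (η y : ℝ) : ℝ :=
  exp (η * y) * (u q p y * ux q p y
      - η / 2 * (ux q p y ^ 2 + 1 / 4 * ∑ a, p a ^ 2 * (1 - Real.sign (y - q a) ^ 2)))
    - ∑ a, (Real.sign (y - q a) + η) / 2 * jump q p η a

noncomputable def primitiveFrozen (ε : Fin M → ℝ) (η y : ℝ) : ℝ :=
  exp (η * y) * (uFrozen q p ε y * uxFrozen q p ε y - η / 2 * uxFrozen q p ε y ^ 2)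
    - ∑ a, (ε a + η) / 2 * jump q p η a

lemma hasDerivAt_primitiveFrozen {η : ℝ} (hη : η ^ 2 = 1) {ε : Fin M → ℝ}
    (hε : ∀ a, ε a ^ 2 = 1) (y : ℝ) :
    HasDerivAt (primitiveFrozen q p ε η)
      (exp (η * y) * (uFrozen q p ε y ^ 2 + 1 / 2 * uxFrozen q p ε y ^ 2)) y := by
  have hu := hasDerivAt_uFrozen q p ε y
  have hux := hasDerivAt_uxFrozen q p hε y
  have hexp : HasDerivAt (fun y => exp (η * y)) (η * exp (η * y)) y := by
    simpa [mul_comm] using ((hasDerivAt_id y).const_mul η).exp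
  refine ((hexp.fun_mul ((hu.fun_mul hux).fun_sub ((hux.fun_pow 2).const_mul (η / 2)))).sub_const
    _).congr_deriv ?_
  linear_combination (-(exp (η * y) * uxFrozen q p ε y ^ 2 / 2)) * hη

def SignsAgreeAt (ε : Fin M → ℝ) (y : ℝ) : Prop :=
  ∀ a, y ≠ q a → ε a = Real.sign (y - q a)

noncomputable def rightSigns (z : ℝ) : Fin M → ℝ := fun a => if z < q a then -1 else 1

noncomputable def leftSigns (z : ℝ) : Fin M → ℝ := fun a => if q a < z then 1 else -1

lemma rightSigns_sq (z : ℝ) (a : Fin M) : rightSigns q z a ^ 2 = 1 := by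
  unfold rightSigns; split_ifs <;> norm_num

lemma leftSigns_sq (z : ℝ) (a : Fin M) : leftSigns q z a ^ 2 = 1 := by
  unfold leftSigns; split_ifs <;> norm_num

lemma rightSigns_eq_leftSigns {z : ℝ} (hz : ∀ a, z ≠ q a) :
    rightSigns q z = leftSigns q z := by
  funext a
  unfold rightSigns leftSigns
  rcases (hz a).lt_or_gt with h | h
  · simp [h, h.not_gt]
  · simp [h, h.not_gt]

lemma eventually_signsAgreeAt_rightSigns (z : ℝ) :
    ∀ᶠ y in 𝓝[≥] z, SignsAgreeAt q (rightSigns q z) y := by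
  have hnear : ∀ᶠ y in 𝓝 z, ∀ a, z < q a → y < q a := eventually_all.2 fun a => by
    by_cases h : z < q a
    · exact (eventually_lt_nhds h).mono fun y hy _ => hy
    · exact .of_forall fun y h' => absurd h' h
  filter_upwards [nhdsWithin_le_nhds hnear, self_mem_nhdsWithin] with y hy (hzy : z ≤ y) a hya
  unfold rightSigns
  split_ifs with h
  · rw [Real.sign_of_neg (sub_neg.2 (hy a h))]
  · rw [Real.sign_of_pos (sub_pos.2 (((not_lt.1 h).trans hzy).lt_of_ne (Ne.symm hya)))]

lemma eventually_signsAgreeAt_leftSigns (z : ℝ) :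
    ∀ᶠ y in 𝓝[≤] z, SignsAgreeAt q (leftSigns q z) y := by
  have hnear : ∀ᶠ y in 𝓝 z, ∀ a, q a < z → q a < y := eventually_all.2 fun a => by
    by_cases h : q a < z
    · exact (eventually_gt_nhds h).mono fun y hy _ => hy
    · exact .of_forall fun y h' => absurd h' h
  filter_upwards [nhdsWithin_le_nhds hnear, self_mem_nhdsWithin] with y hy (hyz : y ≤ z) a hya
  unfold leftSigns
  split_ifs with h
  · rw [Real.sign_of_pos (sub_pos.2 (hy a h))]
  · rw [Real.sign_of_neg (sub_neg.2 (hyz.trans (not_lt.1 h) |>.lt_of_ne hya))]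

lemma eventually_signsAgreeAt_rightSigns_of_forall_ne {z : ℝ} (hz : ∀ a, z ≠ q a) :
    ∀ᶠ y in 𝓝 z, SignsAgreeAt q (rightSigns q z) y := by
  rw [← nhdsLE_sup_nhdsGE, eventually_sup, rightSigns_eq_leftSigns q hz]
  exact ⟨eventually_signsAgreeAt_leftSigns q z,
    rightSigns_eq_leftSigns q hz ▸ eventually_signsAgreeAt_rightSigns q z⟩

lemma abs_u_mul_ux_sub_le {η : ℝ} (hη : |η| ≤ 1) (y : ℝ) :
    |u q p y * ux q p y - η / 2 * ux q p y ^ 2| ≤ 3 / 2 * (∑ a, |p a|) ^ 2 := by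
  have hu := abs_u_le q p y
  have hx := abs_ux_le q p y
  calc |u q p y * ux q p y - η / 2 * ux q p y ^ 2|
      ≤ |u q p y * ux q p y| + |η / 2 * ux q p y ^ 2| := abs_sub _ _
    _ ≤ (∑ a, |p a|) * (∑ a, |p a|) + 1 / 2 * (∑ a, |p a|) ^ 2 := by
        rw [abs_mul, abs_mul, abs_div, abs_two, abs_pow]
        gcongr
    _ = 3 / 2 * (∑ a, |p a|) ^ 2 := by ring

variable {q}

lemma primitive_of_forall_ne {y : ℝ} (hy : ∀ a, y ≠ q a) (η : ℝ) :
    primitive q p η y = exp (η * y) * (u q p y * ux q p y - η / 2 * ux q p y ^ 2)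
      - ∑ a, (Real.sign (y - q a) + η) / 2 * jump q p η a := by
  rw [primitive, Finset.sum_eq_zero (s := Finset.univ)
    (f := fun a => p a ^ 2 * (1 - Real.sign (y - q a) ^ 2))
    (fun a _ => by rw [Real.sign_sq_of_ne_zero_s7 (sub_ne_zero.2 (hy a))]; ring)]
  ring

lemma SignsAgreeAt.exp_eq {ε : Fin M → ℝ} {y : ℝ} (h : SignsAgreeAt q ε y) (a : Fin M) :
    exp (-(ε a * (y - q a))) = exp (-|y - q a|) := by
  by_cases hya : y = q a
  · simp [hya]
  · rw [h a hya, Real.sign_mul_self]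

lemma SignsAgreeAt.uFrozen_eq {ε : Fin M → ℝ} {y : ℝ} (h : SignsAgreeAt q ε y) :
    uFrozen q p ε y = u q p y := by
  simp only [uFrozen, u, h.exp_eq]

lemma SignsAgreeAt.uxFrozen_sub_ux {ε : Fin M → ℝ} {y : ℝ} (h : SignsAgreeAt q ε y) :
    uxFrozen q p ε y - ux q p y
      = -(1 / 2) * ∑ a, p a * (ε a - Real.sign (y - q a)) * exp (-|y - q a|) := by
  simp only [uxFrozen, ux, h.exp_eq, ← mul_sub, ← Finset.sum_sub_distrib]
  congr 1
  exact Finset.sum_congr rfl fun a _ => by ring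

lemma SignsAgreeAt.uxFrozen_eq {ε : Fin M → ℝ} {y : ℝ} (h : SignsAgreeAt q ε y)
    (hy : ∀ a, y ≠ q a) : uxFrozen q p ε y = ux q p y := by
  rw [← sub_eq_zero, h.uxFrozen_sub_ux, Finset.sum_eq_zero fun a _ => by rw [h a (hy a)]; ring,
    mul_zero]

lemma sum_eq_of_injective {c : Fin M} (hq : Function.Injective q) {f : Fin M → ℝ}
    (hf : ∀ a, q c ≠ q a → f a = 0) : ∑ a, f a = f c :=
  Finset.sum_eq_single c (fun a _ hac => hf a (hq.ne (Ne.symm hac))) (by simp)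

lemma SignsAgreeAt.primitive_eq {ε : Fin M → ℝ} {z : ℝ} (h : SignsAgreeAt q ε z)
    (hq : Function.Injective q) (hε : ∀ a, ε a ^ 2 = 1) (η : ℝ) :
    primitive q p η z = primitiveFrozen q p ε η z := by
  by_cases hpeak : ∃ c, z = q c
  · obtain ⟨c, rfl⟩ := hpeak
    have hjump : ∑ a, (ε a + η) / 2 * jump q p η a
        = ∑ a, (Real.sign (q c - q a) + η) / 2 * jump q p η a
          + ∑ a, (ε a - Real.sign (q c - q a)) / 2 * jump q p η a := by
      rw [← Finset.sum_add_distrib]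
      exact Finset.sum_congr rfl fun a _ => by ring
    unfold primitive primitiveFrozen
    rw [h.uFrozen_eq p, hjump,
      sum_eq_of_injective hq (f := fun a => p a ^ 2 * (1 - Real.sign (q c - q a) ^ 2))
        (fun a ha => by rw [Real.sign_sq_of_ne_zero_s7 (sub_ne_zero.2 ha)]; ring),
      sum_eq_of_injective hq (f := fun a => (ε a - Real.sign (q c - q a)) / 2 * jump q p η a)
        (fun a ha => by rw [h a ha]; ring)]
    have hux := h.uxFrozen_sub_ux p
    rw [sum_eq_of_injective hq (c := c) (fun a ha => by rw [h a ha]; ring)] at hux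
    simp only [sub_self, Real.sign_zero, abs_zero, neg_zero, exp_zero] at hux ⊢
    rw [show uxFrozen q p ε (q c) = ux q p (q c) - 1 / 2 * p c * ε c by linarith, jump]
    linear_combination (exp (η * q c) * η * p c ^ 2 / 8) * hε c
  · push Not at hpeak
    rw [primitive_of_forall_ne p hpeak, primitiveFrozen, h.uFrozen_eq p, h.uxFrozen_eq p hpeak]
    congr 1
    exact Finset.sum_congr rfl fun a _ => by rw [h a (hpeak a)]

lemma continuousWithinAt_primitive (hq : Function.Injective q) {η : ℝ} (hη : η ^ 2 = 1)
    {ε : Fin M → ℝ} (hε : ∀ a, ε a ^ 2 = 1) {s : Set ℝ} {z : ℝ} (hz : z ∈ s)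
    (h : ∀ᶠ y in 𝓝[s] z, SignsAgreeAt q ε y) : ContinuousWithinAt (primitive q p η) s z :=
  (hasDerivAt_primitiveFrozen q p hη hε z).continuousAt.continuousWithinAt
    |>.congr_of_eventuallyEq_of_mem (h.mono fun _ hy => hy.primitive_eq p hq hε η) hz

lemma continuous_primitive (hq : Function.Injective q) {η : ℝ} (hη : η ^ 2 = 1) :
    Continuous (primitive q p η) :=
  continuous_iff_continuousAt.2 fun z => continuousAt_iff_continuous_left_right.2
    ⟨continuousWithinAt_primitive p hq hη (leftSigns_sq q z) self_mem_Iic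
      (eventually_signsAgreeAt_leftSigns q z),
    continuousWithinAt_primitive p hq hη (rightSigns_sq q z) self_mem_Ici
      (eventually_signsAgreeAt_rightSigns q z)⟩

lemma hasDerivAt_primitive (hq : Function.Injective q) {η : ℝ} (hη : η ^ 2 = 1) {z : ℝ}
    (hz : ∀ a, z ≠ q a) : HasDerivAt (primitive q p η) (exp (η * z) * source q p z) z := by
  have h := eventually_signsAgreeAt_rightSigns_of_forall_ne q hz
  have hd := hasDerivAt_primitiveFrozen q p hη (rightSigns_sq q z) z
  rw [h.self_of_nhds.uFrozen_eq, h.self_of_nhds.uxFrozen_eq p hz] at hd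
  exact hd.congr_of_eventuallyEq (h.mono fun _ hy => hy.primitive_eq p hq (rightSigns_sq q z) η)

lemma tendsto_primitive_one_atBot : Tendsto (primitive q p 1) atBot (𝓝 0) := by
  have heq : (fun y => exp y * (u q p y * ux q p y - 1 / 2 * ux q p y ^ 2))
      =ᶠ[atBot] primitive q p 1 := by
    filter_upwards [eventually_all.2 fun a => eventually_lt_atBot (q a)] with y hy
    rw [primitive_of_forall_ne p (fun a => (hy a).ne), one_mul,
      Finset.sum_eq_zero fun a _ => by rw [Real.sign_of_neg (sub_neg.2 (hy a))]; ring, sub_zero]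
  refine (tendsto_exp_atBot.zero_mul_isBoundedUnder_le
    (isBoundedUnder_of ⟨3 / 2 * (∑ a, |p a|) ^ 2, fun y => ?_⟩)).congr' heq
  exact abs_u_mul_ux_sub_le q p (by norm_num) y

lemma tendsto_primitive_neg_one_atTop : Tendsto (primitive q p (-1)) atTop (𝓝 0) := by
  have heq : (fun y => exp (-y) * (u q p y * ux q p y - -1 / 2 * ux q p y ^ 2))
      =ᶠ[atTop] primitive q p (-1) := by
    filter_upwards [eventually_all.2 fun a => eventually_gt_atTop (q a)] with y hy
    rw [primitive_of_forall_ne p (fun a => (hy a).ne'), neg_one_mul,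
      Finset.sum_eq_zero fun a _ => by rw [Real.sign_of_pos (sub_pos.2 (hy a))]; ring, sub_zero]
  refine (tendsto_exp_neg_atTop_nhds_zero.zero_mul_isBoundedUnder_le
    (isBoundedUnder_of ⟨3 / 2 * (∑ a, |p a|) ^ 2, fun y => ?_⟩)).congr' heq
  exact abs_u_mul_ux_sub_le q p (by norm_num) y

lemma integral_Iic_exp_mul_source (hq : Function.Injective q) (x : ℝ) :
    ∫ y in Iic x, exp y * source q p y = primitive q p 1 x :=
  integral_Iic_eq_of_hasDerivAt_off_countable (Set.finite_range q).countable
    (continuous_primitive p hq (by norm_num))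
    (fun y hy => by
      simpa using hasDerivAt_primitive p hq (η := 1) (by norm_num) (fun a h => hy ⟨a, h.symm⟩))
    (integrableOn_Iic_exp_mul (measurable_source q p).aestronglyMeasurable (abs_source_le q p) x)
    (tendsto_primitive_one_atBot p)

lemma integral_Ioi_exp_neg_mul_source (hq : Function.Injective q) (x : ℝ) :
    ∫ y in Ioi x, exp (-y) * source q p y = -primitive q p (-1) x :=
  integral_Ioi_eq_of_hasDerivAt_off_countable (Set.finite_range q).countable
    (continuous_primitive p hq (by norm_num))
    (fun y hy => by
      simpa using
        hasDerivAt_primitive p hq (η := -1) (by norm_num) (fun a h => hy ⟨a, h.symm⟩))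
    (integrableOn_Ioi_exp_neg_mul (measurable_source q p).aestronglyMeasurable
      (abs_source_le q p) x)
    (tendsto_primitive_neg_one_atTop p)

lemma Kconv_source (hq : Function.Injective q) :
    Kconv (source q p)
      = fun x => exp (-x) / 2 * primitive q p 1 x - exp x / 2 * primitive q p (-1) x := by
  funext x
  rw [Kconv_eq_integral_Iic_add_integral_Ioi
      (integrableOn_Iic_exp_mul (measurable_source q p).aestronglyMeasurable (abs_source_le q p) x)
      (integrableOn_Ioi_exp_neg_mul (measurable_source q p).aestronglyMeasurable
        (abs_source_le q p) x),
    integral_Iic_exp_mul_source p hq, integral_Ioi_exp_neg_mul_source p hq]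
  ring

lemma jump_combination {x : ℝ} {a : Fin M} (hxa : x ≠ q a) :
    exp (-x) * ((Real.sign (x - q a) + 1) / 2 * jump q p 1 a)
      + exp x * ((Real.sign (x - q a) + -1) / 2 * jump q p (-1) a)
      = p a * (ux q p (q a) - Real.sign (x - q a) * u q p (q a)) * exp (-|x - q a|) := by
  unfold jump
  rcases hxa.lt_or_gt with h | h
  · have hexp : exp x * exp (-1 * q a) = exp (-|x - q a|) := by
      rw [abs_of_neg (sub_neg.2 h), ← exp_add]; ring_nf
    rw [Real.sign_of_neg (sub_neg.2 h)]
    linear_combination (p a * (u q p (q a) + ux q p (q a))) * hexp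
  · have hexp : exp (-x) * exp (1 * q a) = exp (-|x - q a|) := by
      rw [abs_of_pos (sub_pos.2 h), ← exp_add]; ring_nf
    rw [Real.sign_of_pos (sub_pos.2 h)]
    linear_combination (p a * (ux q p (q a) - u q p (q a))) * hexp

lemma primitive_combination {x : ℝ} (hx : ∀ a, x ≠ q a) :
    exp (-x) * primitive q p 1 x + exp x * primitive q p (-1) x
      = 2 * (u q p x * ux q p x)
        - ∑ a, p a * (ux q p (q a) - Real.sign (x - q a) * u q p (q a)) * exp (-|x - q a|) := by
  rw [primitive_of_forall_ne p hx, primitive_of_forall_ne p hx,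
    ← Finset.sum_congr rfl fun a _ => jump_combination p (hx a), Finset.sum_add_distrib,
    ← Finset.mul_sum, ← Finset.mul_sum]
  have h1 : exp (-x) * exp (1 * x) = 1 := by rw [← exp_add]; simp
  have h2 : exp x * exp (-1 * x) = 1 := by rw [← exp_add]; simp
  linear_combination (u q p x * ux q p x - 1 / 2 * ux q p x ^ 2) * h1
    + (u q p x * ux q p x + 1 / 2 * ux q p x ^ 2) * h2

theorem hasDerivAt_Kconv_source (hq : Function.Injective q) {x : ℝ} (hx : ∀ a, x ≠ q a) :
    HasDerivAt (Kconv (source q p))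
      (-(u q p x * ux q p x)
        + 1 / 2 * ∑ a, p a * (ux q p (q a) - Real.sign (x - q a) * u q p (q a))
          * exp (-|x - q a|)) x := by
  rw [Kconv_source p hq]
  have h1 := hasDerivAt_primitive p hq (η := 1) (by norm_num) hx
  have h2 := hasDerivAt_primitive p hq (η := -1) (by norm_num) hx
  have he1 : HasDerivAt (fun x => exp (-x) / 2) (-exp (-x) / 2) x := by
    simpa using ((hasDerivAt_neg x).exp).div_const 2
  have he2 : HasDerivAt (fun x => exp x / 2) (exp x / 2) x := (hasDerivAt_exp x).div_const 2
  refine ((he1.fun_mul h1).fun_sub (he2.fun_mul h2)).congr_deriv ?_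
  rw [one_mul, neg_one_mul]
  linear_combination (-1 / 2) * primitive_combination p hx

end Peakon

theorem Peakon.hasDerivAt_u_time {M : ℕ} {q p : Fin M → ℝ → ℝ} {x t : ℝ}
    (hq : ∀ a, DifferentiableAt ℝ (q a) t) (hp : ∀ a, DifferentiableAt ℝ (p a) t)
    (hx : ∀ a, x ≠ q a t) :
    HasDerivAt (fun s => u (fun a => q a s) (fun a => p a s) x)
      (1 / 2 * ∑ a, (deriv (p a) t + p a t * Real.sign (x - q a t) * deriv (q a) t)
        * exp (-|x - q a t|)) t := by
  refine (HasDerivAt.fun_sum (u := Finset.univ) fun a _ => (hp a).hasDerivAt.fun_mul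
    (HasDerivAt.exp_neg_abs_const_sub (hq a).hasDerivAt (hx a))).const_mul _ |>.congr_deriv ?_
  congr 1
  exact Finset.sum_congr rfl fun a _ => by ring

theorem peakon_train_solves_camassaHolm_general (M : ℕ) (T : ℝ)
    (q p : Fin M → ℝ → ℝ)
    -- q, p are C¹ on [0,T)
    (hq_diff : ∀ a, ∀ t ∈ Set.Ico (0 : ℝ) T, DifferentiableAt ℝ (q a) t)
    (hp_diff : ∀ a, ∀ t ∈ Set.Ico (0 : ℝ) T, DifferentiableAt ℝ (p a) t)
    -- the positions are pairwise distinct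
    (hq_ne : ∀ t ∈ Set.Ico (0 : ℝ) T, ∀ a b : Fin M, a ≠ b → q a t ≠ q b t)
    -- canonical Hamiltonian equations for the peakon trajectories
    (hq_eqn : ∀ a, ∀ t ∈ Set.Ico (0 : ℝ) T,
      deriv (q a) t = (1 / 2) * ∑ b, p b t * Real.exp (-|q a t - q b t|))
    -- canonical Hamiltonian equations for the peakon momenta (with sgn 0 = 0)
    (hp_eqn : ∀ a, ∀ t ∈ Set.Ico (0 : ℝ) T,
      deriv (p a) t
        = (1 / 2) * p a t * ∑ b, p b t * Real.sign (q a t - q b t)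
            * Real.exp (-|q a t - q b t|)) :
    let u : ℝ → ℝ → ℝ := fun x t => (1 / 2) * ∑ a, p a t * Real.exp (-|x - q a t|)
    let ux : ℝ → ℝ → ℝ := fun y t =>
      -(1 / 2) * ∑ a, p a t * Real.sign (y - q a t) * Real.exp (-|y - q a t|)
    ∀ t ∈ Set.Ico (0 : ℝ) T, ∀ x : ℝ, (∀ a : Fin M, x ≠ q a t) →
      deriv (fun t' => u x t') t + u x t * ux x t
        = - deriv (Kconv (fun y => (u y t) ^ 2 + (1 / 2) * (ux y t) ^ 2)) x := by
  intro u ux t ht x hx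
  change deriv (fun s => Peakon.u (fun a => q a s) (fun a => p a s) x) t
      + Peakon.u (fun a => q a t) (fun a => p a t) x * Peakon.ux (fun a => q a t) (fun a => p a t) x
    = -deriv (Kconv (Peakon.source (fun a => q a t) (fun a => p a t))) x
  set qt : Fin M → ℝ := fun a => q a t
  set pt : Fin M → ℝ := fun a => p a t
  have hinj : Function.Injective qt := fun a b hab => by_contra fun hne => hq_ne t ht a b hne hab
  have hq_dot : ∀ a, deriv (q a) t = Peakon.u qt pt (qt a) := fun a => hq_eqn a t ht
  have hp_dot : ∀ a, deriv (p a) t = -(pt a * Peakon.ux qt pt (qt a)) := fun a => by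
    rw [hp_eqn a t ht, Peakon.ux]; ring
  rw [(Peakon.hasDerivAt_u_time (fun a => hq_diff a t ht) (fun a => hp_diff a t ht) hx).deriv,
    (Peakon.hasDerivAt_Kconv_source pt hinj hx).deriv]
  have hsum : ∑ a, (deriv (p a) t + p a t * Real.sign (x - q a t) * deriv (q a) t)
        * exp (-|x - q a t|)
      = -∑ a, pt a * (Peakon.ux qt pt (qt a) - Real.sign (x - qt a) * Peakon.u qt pt (qt a))
        * exp (-|x - qt a|) := by
    rw [← Finset.sum_neg_distrib]
    exact Finset.sum_congr rfl fun a _ => by rw [hq_dot, hp_dot]; ring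
  linear_combination (1 / 2) * hsum

/-- If the positions `q_a` and momenta `p_a` of `M` peakons satisfy the
canonical peakon Hamiltonian equations, then the peakon wave train
`u(x,t) = ½ Σ_a p_a(t) e^{-|x - q_a(t)|}` satisfies the advective form of the
Camassa–Holm equation `u_t + u u_x = -∂ₓ(K∗(u² + ½ u_x²))` away from the
peaks, where `u_x` denotes the a.e.-defined spatial derivative. -/
theorem peakon_train_solves_camassaHolm (M : ℕ) (hM : 1 ≤ M) (T : ℝ) (hT : 0 < T)
    (q p : Fin M → ℝ → ℝ)
    -- q, p are C¹ on [0,T)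
    (hq_diff : ∀ a, ∀ t ∈ Set.Ico (0 : ℝ) T, DifferentiableAt ℝ (q a) t)
    (hp_diff : ∀ a, ∀ t ∈ Set.Ico (0 : ℝ) T, DifferentiableAt ℝ (p a) t)
    (hq_cont : ∀ a, ContinuousOn (deriv (q a)) (Set.Ico (0 : ℝ) T))
    (hp_cont : ∀ a, ContinuousOn (deriv (p a)) (Set.Ico (0 : ℝ) T))
    -- the positions are pairwise distinct
    (hq_ne : ∀ t ∈ Set.Ico (0 : ℝ) T, ∀ a b : Fin M, a ≠ b → q a t ≠ q b t)
    -- canonical Hamiltonian equations for the peakon trajectories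
    (hq_eqn : ∀ a, ∀ t ∈ Set.Ico (0 : ℝ) T,
      deriv (q a) t = (1 / 2) * ∑ b, p b t * Real.exp (-|q a t - q b t|))
    -- canonical Hamiltonian equations for the peakon momenta (with sgn 0 = 0)
    (hp_eqn : ∀ a, ∀ t ∈ Set.Ico (0 : ℝ) T,
      deriv (p a) t
        = (1 / 2) * p a t * ∑ b, p b t * Real.sign (q a t - q b t)
            * Real.exp (-|q a t - q b t|)) :
    let u : ℝ → ℝ → ℝ := fun x t => (1 / 2) * ∑ a, p a t * Real.exp (-|x - q a t|)
    let ux : ℝ → ℝ → ℝ := fun y t =>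
      -(1 / 2) * ∑ a, p a t * Real.sign (y - q a t) * Real.exp (-|y - q a t|)
    ∀ t ∈ Set.Ico (0 : ℝ) T, ∀ x : ℝ, (∀ a : Fin M, x ≠ q a t) →
      deriv (fun t' => u x t') t + u x t * ux x t
        = - deriv (Kconv (fun y => (u y t) ^ 2 + (1 / 2) * (ux y t) ^ 2)) x :=
  peakon_train_solves_camassaHolm_general M T q p hq_diff hp_diff hq_ne hq_eqn hp_eqn
end
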